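/- arXiv:1011.6429 — 6 statements merged into one kernel-verified Lean document; each statement's English description precedes it below -/
import Mathlib

section
/- For every ACP*01 expression p (over any nonempty action set Act and any communication function γ), the set Reach(p) = {p' | p →* p'} of expressions reachable from p under the operational semantics is finite. Consequently the same holds for every PA*01 expression and every BPA*01 expression, since these are the ACP*01 expressions without encapsulation (and, for BPA*01, also without parallel composition), with the induced transition relation. -/
/-- ACP*01 expressions over an action set `Act`. -/
inductive Expr (Act : Type) : Type
  | dl : Expr Act
  | emp : Expr Act
  | act : Act → Expr Act
  | seq : Expr Act → Expr Act → Expr Act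
  | alt : Expr Act → Expr Act → Expr Act
  | star : Expr Act → Expr Act
  | par : Expr Act → Expr Act → Expr Act
  | encap : Set Act → Expr Act → Expr Act

variable {Act : Type}

/-- The termination predicate `↓` of ACP*01. -/
inductive Term : Expr Act → Prop
  | emp : Term Expr.emp
  | altl {p q : Expr Act} : Term p → Term (Expr.alt p q)
  | altr {p q : Expr Act} : Term q → Term (Expr.alt p q)
  | seq {p q : Expr Act} : Term p → Term q → Term (Expr.seq p q)
  | star {p : Expr Act} : Term (Expr.star p)
  | par {p q : Expr Act} : Term p → Term q → Term (Expr.par p q)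
  | encap {p : Expr Act} {H : Set Act} : Term p → Term (Expr.encap H p)

/-- The transition relation `p →a p'` of ACP*01, for communication function `γ`. -/
inductive Step (γ : Act → Act → Option Act) : Expr Act → Act → Expr Act → Prop
  | act {a : Act} : Step γ (Expr.act a) a Expr.emp
  | altl {p q p' : Expr Act} {a : Act} : Step γ p a p' → Step γ (Expr.alt p q) a p'
  | altr {p q q' : Expr Act} {a : Act} : Step γ q a q' → Step γ (Expr.alt p q) a q'
  | seql {p q p' : Expr Act} {a : Act} :
      Step γ p a p' → Step γ (Expr.seq p q) a (Expr.seq p' q)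
  | seqr {p q q' : Expr Act} {a : Act} :
      Term p → Step γ q a q' → Step γ (Expr.seq p q) a q'
  | star {p p' : Expr Act} {a : Act} :
      Step γ p a p' → Step γ (Expr.star p) a (Expr.seq p' (Expr.star p))
  | parl {p q p' : Expr Act} {a : Act} :
      Step γ p a p' → Step γ (Expr.par p q) a (Expr.par p' q)
  | parr {p q q' : Expr Act} {a : Act} :
      Step γ q a q' → Step γ (Expr.par p q) a (Expr.par p q')
  | comm {p q p' q' : Expr Act} {a b c : Act} :
      Step γ p a p' → Step γ q b q' → γ a b = some c →
      Step γ (Expr.par p q) c (Expr.par p' q')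
  | encap {p p' : Expr Act} {a : Act} {H : Set Act} :
      Step γ p a p' → a ∉ H → Step γ (Expr.encap H p) a (Expr.encap H p')

/-- `p → p'`: a transition with some label. -/
def StepAny (γ : Act → Act → Option Act) (p q : Expr Act) : Prop := ∃ a, Step γ p a q

/-- `p →* p'`: reachability. -/
def Reach (γ : Act → Act → Option Act) (p q : Expr Act) : Prop :=
  Relation.ReflTransGen (StepAny γ) p q

/-- `γ` is a communication function: an associative and commutative
binary partial operation on `Act`. -/
def IsCommFun (γ : Act → Act → Option Act) : Prop :=
  (∀ x y, γ x y = γ y x) ∧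
    (∀ x y z, (γ x y).bind (fun w => γ w z) = (γ y z).bind (fun w => γ x w))

/-- `γ` is handshaking: `γ (γ a b) c` is never defined. -/
def IsHandshaking (γ : Act → Act → Option Act) : Prop :=
  ∀ x y z w, γ x y = some w → γ w z = none

/-- ACP*01 expressions without occurrences of encapsulation. -/
def NoEncap : Expr Act → Prop
  | Expr.dl => True
  | Expr.emp => True
  | Expr.act _ => True
  | Expr.seq p q => NoEncap p ∧ NoEncap q
  | Expr.alt p q => NoEncap p ∧ NoEncap q
  | Expr.star p => NoEncap p
  | Expr.par p q => NoEncap p ∧ NoEncap q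
  | Expr.encap _ _ => False

/-- ACP*01 expressions without occurrences of parallel composition. -/
def NoPar : Expr Act → Prop
  | Expr.dl => True
  | Expr.emp => True
  | Expr.act _ => True
  | Expr.seq p q => NoPar p ∧ NoPar q
  | Expr.alt p q => NoPar p ∧ NoPar q
  | Expr.star p => NoPar p
  | Expr.par _ _ => False
  | Expr.encap _ p => NoPar p

/-- A bisimulation between two `Act`-labelled transition system spaces. -/
def IsBisimulation {S₁ S₂ : Type} (st₁ : S₁ → Act → S₁ → Prop) (t₁ : S₁ → Prop)
    (st₂ : S₂ → Act → S₂ → Prop) (t₂ : S₂ → Prop) (R : S₁ → S₂ → Prop) : Prop :=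
  ∀ s₁ s₂, R s₁ s₂ →
    (∀ a s₁', st₁ s₁ a s₁' → ∃ s₂', st₂ s₂ a s₂' ∧ R s₁' s₂') ∧
    (∀ a s₂', st₂ s₂ a s₂' → ∃ s₁', st₁ s₁ a s₁' ∧ R s₁' s₂') ∧
    (t₁ s₁ ↔ t₂ s₂)

/-- Bisimilarity between states of two `Act`-labelled transition system spaces. -/
def Bisimilar {S₁ S₂ : Type} (st₁ : S₁ → Act → S₁ → Prop) (t₁ : S₁ → Prop)
    (st₂ : S₂ → Act → S₂ → Prop) (t₂ : S₂ → Prop) (s₁ : S₁) (s₂ : S₂) : Prop :=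
  ∃ R : S₁ → S₂ → Prop, IsBisimulation st₁ t₁ st₂ t₂ R ∧ R s₁ s₂

/-!
Every expression reachable from `p` lies in the set `derivs p`, defined by structural recursion:
the derivatives of `p·q` are the `r·q` with `r` a derivative of `p` together with all derivatives
of `q`, those of `p*` are `p*` and the `r·p*`, and those of `p‖q` and `∂_H(p)` are built
componentwise. This set is finite, contains `p`, and is closed under transitions for every `γ`.
-/

namespace Expr

def derivs : Expr Act → Set (Expr Act)
  | dl => {dl}
  | emp => {emp}
  | act a => {act a, emp}
  | seq p q => (seq · q) '' derivs p ∪ derivs q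
  | alt p q => insert (alt p q) (derivs p ∪ derivs q)
  | star p => insert (star p) ((seq · (star p)) '' derivs p)
  | par p q => Set.image2 par (derivs p) (derivs q)
  | encap H p => encap H '' derivs p

theorem mem_derivs_self : ∀ p : Expr Act, p ∈ derivs p
  | dl | emp | act _ | alt _ _ | star _ => by simp [derivs]
  | seq p _ => Or.inl ⟨p, mem_derivs_self p, rfl⟩
  | par p q => ⟨p, mem_derivs_self p, q, mem_derivs_self q, rfl⟩
  | encap _ p => ⟨p, mem_derivs_self p, rfl⟩

theorem derivs_finite : ∀ p : Expr Act, (derivs p).Finite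
  | dl | emp => Set.finite_singleton _
  | act _ => (Set.finite_singleton _).insert _
  | seq p q => ((derivs_finite p).image _).union (derivs_finite q)
  | alt p q => ((derivs_finite p).union (derivs_finite q)).insert _
  | star p => ((derivs_finite p).image _).insert _
  | par p q => (derivs_finite p).image2 _ (derivs_finite q)
  | encap _ p => (derivs_finite p).image _

theorem mem_derivs_of_step (γ : Act → Act → Option Act) (p : Expr Act) {r r' : Expr Act}
    {a : Act} (hr : r ∈ derivs p) (hs : Step γ r a r') : r' ∈ derivs p := by
  induction p generalizing r r' a with
  | dl | emp =>
    obtain rfl := hr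
    cases hs
  | act b =>
    obtain rfl | rfl := hr
    · cases hs
      exact Or.inr rfl
    · cases hs
  | seq p q ihp ihq =>
    obtain ⟨s, hs', rfl⟩ | hr := hr
    · cases hs with
      | seql h => exact Or.inl ⟨_, ihp hs' h, rfl⟩
      | seqr _ h => exact Or.inr (ihq (mem_derivs_self q) h)
    · exact Or.inr (ihq hr hs)
  | alt p q ihp ihq =>
    obtain rfl | hr | hr := hr
    · cases hs with
      | altl h => exact Or.inr (Or.inl (ihp (mem_derivs_self p) h))
      | altr h => exact Or.inr (Or.inr (ihq (mem_derivs_self q) h))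
    · exact Or.inr (Or.inl (ihp hr hs))
    · exact Or.inr (Or.inr (ihq hr hs))
  | star p ih =>
    -- a terminated `s` in `s·p*` hands over to `p*`, whose steps again lead to some `s'·p*`
    have hstar : ∀ {a r'}, Step γ (star p) a r' → r' ∈ derivs (star p) := by
      intro a r' h
      cases h with
      | star h => exact Or.inr ⟨_, ih (mem_derivs_self p) h, rfl⟩
    obtain rfl | ⟨s, hs', rfl⟩ := hr
    · exact hstar hs
    · cases hs with
      | seql h => exact Or.inr ⟨_, ih hs' h, rfl⟩
      | seqr _ h => exact hstar h
  | par p q ihp ihq =>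
    obtain ⟨s, hsp, t, htq, rfl⟩ := hr
    cases hs with
    | parl h => exact ⟨_, ihp hsp h, _, htq, rfl⟩
    | parr h => exact ⟨_, hsp, _, ihq htq h, rfl⟩
    | comm h₁ h₂ _ => exact ⟨_, ihp hsp h₁, _, ihq htq h₂, rfl⟩
  | encap H p ih =>
    obtain ⟨s, hsp, rfl⟩ := hr
    cases hs with
    | encap h _ => exact ⟨_, ih hsp h, rfl⟩

theorem reach_subset_derivs (γ : Act → Act → Option Act) (p : Expr Act) :
    {q | Reach γ p q} ⊆ derivs p := by
  intro q hq
  induction hq with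
  | refl => exact mem_derivs_self p
  | tail _ hstep ih =>
    obtain ⟨a, hstep⟩ := hstep
    exact mem_derivs_of_step γ p ih hstep

theorem finite_setOf_reach (γ : Act → Act → Option Act) (p : Expr Act) :
    {q | Reach γ p q}.Finite :=
  (derivs_finite p).subset (reach_subset_derivs γ p)

end Expr

theorem reach_finite_general {Act : Type}
    (γ : Act → Act → Option Act) :
    (∀ p : Expr Act, {q | Reach γ p q}.Finite) ∧
    (∀ p : Expr Act, NoEncap p → {q | Reach (fun _ _ => none) p q}.Finite) ∧
    (∀ p : Expr Act, NoEncap p → NoPar p →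
      {q | Reach (fun _ _ => none) p q}.Finite) :=
  ⟨Expr.finite_setOf_reach γ, fun p _ => Expr.finite_setOf_reach _ p,
    fun p _ _ => Expr.finite_setOf_reach _ p⟩

/-- For every ACP*01 expression `p` (over any nonempty action set and any
communication function `γ`), the set of expressions reachable from `p` is finite;
consequently the same holds for PA*01 expressions (no encapsulation, `γ` everywhere
undefined) and BPA*01 expressions (additionally no parallel composition). -/
theorem reach_finite {Act : Type} [Nonempty Act]
    (γ : Act → Act → Option Act) (hγ : IsCommFun γ) :
    (∀ p : Expr Act, {q | Reach γ p q}.Finite) ∧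
    (∀ p : Expr Act, NoEncap p → {q | Reach (fun _ _ => none) p q}.Finite) ∧
    (∀ p : Expr Act, NoEncap p → NoPar p →
      {q | Reach (fun _ _ => none) p q}.Finite) :=
  reach_finite_general γ
end

section
/- Let T₁ = (S₁,→₁,↓₁) and T₂ = (S₂,→₂,↓₂) be regular Act-labelled transition system spaces, and let s₁ ∈ S₁ and s₂ ∈ S₂ be bisimilar states. If s₁ is an element of a strongly connected component C₁ in T₁, then there exists a strongly connected component C₂ in T₂ reachable from s₂ such that for every s₁' ∈ C₁ there exists s₂' ∈ C₂ with s₁' bisimilar to s₂'. -/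
variable {Act : Type}

/-- `s → s'`: a transition with some label, in a transition system space given by `st`. -/
def StepAnyOf {S : Type} (st : S → Act → S → Prop) (s s' : S) : Prop := ∃ a, st s a s'

/-- `s →* s'`: reachability. -/
def ReachOf {S : Type} (st : S → Act → S → Prop) (s s' : S) : Prop :=
  Relation.ReflTransGen (StepAnyOf st) s s'

/-- A transition system space is regular if every state has finitely many
reachable states. -/
def RegularTSS {S : Type} (st : S → Act → S → Prop) : Prop :=
  ∀ s : S, {s' | ReachOf st s s'}.Finite

/-- A strongly connected component: a maximal set of mutually reachable states. -/
def IsSCCOf {S : Type} (st : S → Act → S → Prop) (C : Set S) : Prop :=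
  (∀ s ∈ C, ∀ t ∈ C, ReachOf st s t) ∧
    ∀ D : Set S, C ⊆ D → (∀ s ∈ D, ∀ t ∈ D, ReachOf st s t) → D = C

/-!
Fix a bisimulation `R` with `R s₁ s₂`. Among the finitely many states `t` reachable from `s₂`
with `R s₁ t`, choose one, `t`, that is maximal for reachability. Every `c ∈ C₁` is matched by
some `u` reachable from `t`, and the way back from `c` to `s₁` is matched by a path from `u` to
some `t'` with `R s₁ t'`. Maximality of `t` gives `t' →* t`, so `u` lies in the SCC of `t`.
-/

section Reachability

variable {S : Type} (st : S → Act → S → Prop)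

theorem isSCCOf_setOf_mutuallyReachable (x : S) :
    IsSCCOf st {y | ReachOf st x y ∧ ReachOf st y x} := by
  refine ⟨fun s hs t ht => hs.2.trans ht.1, fun D hCD hD => ?_⟩
  have hxD : x ∈ D := hCD ⟨.refl, .refl⟩
  exact Set.Subset.antisymm (fun d hd => ⟨hD x hxD d hd, hD d hd x hxD⟩) hCD

theorem exists_reachOf_maximal {X : Set S} (hX : X.Finite) (hne : X.Nonempty) :
    ∃ t ∈ X, ∀ t' ∈ X, ReachOf st t t' → ReachOf st t' t := by
  let _ : Preorder S :=
    { le := ReachOf st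
      le_refl := fun _ => .refl
      le_trans := fun _ _ _ => .trans }
  obtain ⟨t, htX, hmax⟩ := hX.exists_maximal hne
  exact ⟨t, htX, fun t' ht'X => hmax ht'X⟩

end Reachability

theorem IsBisimulation.exists_reachOf {S₁ S₂ : Type} {st₁ : S₁ → Act → S₁ → Prop}
    {t₁ : S₁ → Prop} {st₂ : S₂ → Act → S₂ → Prop} {t₂ : S₂ → Prop} {R : S₁ → S₂ → Prop}
    (hR : IsBisimulation st₁ t₁ st₂ t₂ R) {x x' : S₁} (h : ReachOf st₁ x x') {y : S₂}
    (hxy : R x y) : ∃ y', ReachOf st₂ y y' ∧ R x' y' := by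
  induction h with
  | refl => exact ⟨y, .refl, hxy⟩
  | tail _ hstep ih =>
    obtain ⟨z, hyz, hz⟩ := ih
    obtain ⟨a, ha⟩ := hstep
    obtain ⟨z', hzz', hz'⟩ := (hR _ z hz).1 a _ ha
    exact ⟨z', hyz.tail ⟨a, hzz'⟩, hz'⟩

theorem scc_bisim_general {S₁ S₂ : Type} (st₁ : S₁ → Act → S₁ → Prop) (t₁ : S₁ → Prop)
    (st₂ : S₂ → Act → S₂ → Prop) (t₂ : S₂ → Prop)
    (h₂ : RegularTSS st₂)
    (s₁ : S₁) (s₂ : S₂) (hb : Bisimilar st₁ t₁ st₂ t₂ s₁ s₂)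
    (C₁ : Set S₁) (hC₁ : IsSCCOf st₁ C₁) (hs₁ : s₁ ∈ C₁) :
    ∃ C₂ : Set S₂, IsSCCOf st₂ C₂ ∧ (∀ s ∈ C₂, ReachOf st₂ s₂ s) ∧
      ∀ s₁' ∈ C₁, ∃ s₂' ∈ C₂, Bisimilar st₁ t₁ st₂ t₂ s₁' s₂' := by
  obtain ⟨R, hR, hRs⟩ := hb
  obtain ⟨t, ⟨hs₂t, hRt⟩, ht_max⟩ := exists_reachOf_maximal st₂
    (X := {t | ReachOf st₂ s₂ t ∧ R s₁ t})
    ((h₂ s₂).subset fun _ ht => ht.1) ⟨s₂, .refl, hRs⟩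
  refine ⟨_, isSCCOf_setOf_mutuallyReachable st₂ t, fun s hs => hs₂t.trans hs.1, ?_⟩
  intro c hc
  obtain ⟨u, htu, hRu⟩ := hR.exists_reachOf (hC₁.1 s₁ hs₁ c hc) hRt
  obtain ⟨t', hut', hRt'⟩ := hR.exists_reachOf (hC₁.1 c hc s₁ hs₁) hRu
  have ht't : ReachOf st₂ t' t :=
    ht_max t' ⟨hs₂t.trans (htu.trans hut'), hRt'⟩ (htu.trans hut')
  exact ⟨u, ⟨htu, hut'.trans ht't⟩, R, hR, hRu⟩

/-- If `s₁` and `s₂` are bisimilar states of regular transition system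
spaces and `s₁` lies in an SCC `C₁`, then there is an SCC `C₂` reachable from `s₂`
such that every state of `C₁` is bisimilar to some state of `C₂`. -/
theorem scc_bisim {S₁ S₂ : Type} (st₁ : S₁ → Act → S₁ → Prop) (t₁ : S₁ → Prop)
    (st₂ : S₂ → Act → S₂ → Prop) (t₂ : S₂ → Prop)
    (h₁ : RegularTSS st₁) (h₂ : RegularTSS st₂)
    (s₁ : S₁) (s₂ : S₂) (hb : Bisimilar st₁ t₁ st₂ t₂ s₁ s₂)
    (C₁ : Set S₁) (hC₁ : IsSCCOf st₁ C₁) (hs₁ : s₁ ∈ C₁) :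
    ∃ C₂ : Set S₂, IsSCCOf st₂ C₂ ∧ (∀ s ∈ C₂, ReachOf st₂ s₂ s) ∧
      ∀ s₁' ∈ C₁, ∃ s₂' ∈ C₂, Bisimilar st₁ t₁ st₂ t₂ s₁' s₂' :=
  scc_bisim_general st₁ t₁ st₂ t₂ h₂ s₁ s₂ hb C₁ hC₁ hs₁
end

section
/- If p and p' are BPA*01 expressions such that p →⁺ p', then OC(p) ≥ OC(p'). Moreover, if OC(p) = OC(p'), then p = p₁·q and p' = p₁'·q for some BPA*01 expressions p₁, p₁' and q. -/
/-- BPA*01 expressions over an action set `Act`. -/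
inductive BExpr (Act : Type) : Type
  | dl : BExpr Act
  | emp : BExpr Act
  | act : Act → BExpr Act
  | seq : BExpr Act → BExpr Act → BExpr Act
  | alt : BExpr Act → BExpr Act → BExpr Act
  | star : BExpr Act → BExpr Act

variable {Act : Type}

/-- The termination predicate `↓` of BPA*01. -/
inductive BTerm : BExpr Act → Prop
  | emp : BTerm BExpr.emp
  | altl {p q : BExpr Act} : BTerm p → BTerm (BExpr.alt p q)
  | altr {p q : BExpr Act} : BTerm q → BTerm (BExpr.alt p q)
  | seq {p q : BExpr Act} : BTerm p → BTerm q → BTerm (BExpr.seq p q)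
  | star {p : BExpr Act} : BTerm (BExpr.star p)

/-- The transition relation `p →a p'` of BPA*01. -/
inductive BStep : BExpr Act → Act → BExpr Act → Prop
  | act {a : Act} : BStep (BExpr.act a) a BExpr.emp
  | altl {p q p' : BExpr Act} {a : Act} : BStep p a p' → BStep (BExpr.alt p q) a p'
  | altr {p q q' : BExpr Act} {a : Act} : BStep q a q' → BStep (BExpr.alt p q) a q'
  | seql {p q p' : BExpr Act} {a : Act} :
      BStep p a p' → BStep (BExpr.seq p q) a (BExpr.seq p' q)
  | seqr {p q q' : BExpr Act} {a : Act} :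
      BTerm p → BStep q a q' → BStep (BExpr.seq p q) a q'
  | star {p p' : BExpr Act} {a : Act} :
      BStep p a p' → BStep (BExpr.star p) a (BExpr.seq p' (BExpr.star p))

/-- `p → p'`: a transition with some label. -/
def BStepAny (p q : BExpr Act) : Prop := ∃ a, BStep p a q

/-- `p →* p'`: reachability. -/
def BReach (p q : BExpr Act) : Prop := Relation.ReflTransGen BStepAny p q

/-- `p` is normed: some terminating expression is reachable from `p`. -/
def BNormed (p : BExpr Act) : Prop := ∃ q, BReach p q ∧ BTerm q

/-- A strongly connected component: a maximal set of mutually reachable states. -/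
def IsSCC (C : Set (BExpr Act)) : Prop :=
  (∀ s ∈ C, ∀ t ∈ C, BReach s t) ∧
    ∀ D : Set (BExpr Act), C ⊆ D → (∀ s ∈ D, ∀ t ∈ D, BReach s t) → D = C

/-- A trivial SCC: a singleton `{s}` with no transition `s → s`. -/
def IsTrivialSCC (C : Set (BExpr Act)) : Prop := ∃ s, C = {s} ∧ ¬ BStepAny s s

/-- `C · q = { p · q | p ∈ C }`. -/
def seqSet (C : Set (BExpr Act)) (q : BExpr Act) : Set (BExpr Act) :=
  (fun p => BExpr.seq p q) '' C

/-- A basic SCC: `C = C' · q*` for some set `C'` that is not an SCC. -/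
def IsBasic (C : Set (BExpr Act)) : Prop :=
  ∃ (C' : Set (BExpr Act)) (q : BExpr Act), C = seqSet C' (BExpr.star q) ∧ ¬ IsSCC C'

/-- The set `Extⁿ(s)` of normed exit transitions from `s`, w.r.t. the SCC `C`. -/
def ExtN (C : Set (BExpr Act)) (s : BExpr Act) : Set (Act × BExpr Act) :=
  {e | BStep s e.1 e.2 ∧ e.2 ∉ C ∧ BNormed e.2}

/-- `s ∈ C` is an alive exit state if `s↓` or `s` has a normed exit transition. -/
def AliveExit (C : Set (BExpr Act)) (s : BExpr Act) : Prop :=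
  s ∈ C ∧ (BTerm s ∨ ∃ e, e ∈ ExtN C s)

/-- `E · q = { (a, r · q) | (a, r) ∈ E }`. -/
def extSeq (E : Set (Act × BExpr Act)) (q : BExpr Act) : Set (Act × BExpr Act) :=
  (fun e => (e.1, BExpr.seq e.2 q)) '' E

/-- Is the expression a star expression? -/
def isStarB : BExpr Act → Bool
  | BExpr.star _ => true
  | _ => false

/-- The measure `OC` on BPA*01 expressions. -/
def OC : BExpr Act → ℕ
  | BExpr.dl => 0
  | BExpr.emp => 0
  | BExpr.act _ => 1
  | BExpr.seq _ q => if isStarB q then 0 else OC q + 1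
  | BExpr.alt p q => max (OC p) (OC q) + 1
  | BExpr.star _ => 1

/-!
A single transition either strictly lowers `OC`, or rewrites only the left factor of a sequential
composition `p₁ · q`; since `OC (p₁ · q)` depends on `q` alone, it is unchanged in the second case.
The only non-obvious case is `p · q → q'` with `p↓`: if `q = r*` then `q' = r' · r*` keeps a common
right factor with `p · r*`, and otherwise `OC (p · q) = OC q + 1` exceeds `OC q'`. Right factors are
recovered by injectivity of `·`, so the dichotomy is preserved along `→⁺`.
-/

def SameSeqTail (p p' : BExpr Act) : Prop :=
  ∃ p₁ p₁' q : BExpr Act, p = BExpr.seq p₁ q ∧ p' = BExpr.seq p₁' q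

namespace SameSeqTail

variable {p p' p'' : BExpr Act}

theorem OC_eq (h : SameSeqTail p p') : OC p = OC p' := by
  obtain ⟨p₁, p₁', q, rfl, rfl⟩ := h
  rfl

theorem trans (h : SameSeqTail p p') (h' : SameSeqTail p' p'') : SameSeqTail p p'' := by
  obtain ⟨p₁, p₁', q, rfl, rfl⟩ := h
  obtain ⟨r, r', s, hrs, rfl⟩ := h'
  obtain ⟨-, rfl⟩ := BExpr.seq.inj hrs
  exact ⟨p₁, r', q, rfl, rfl⟩

end SameSeqTail

theorem OC_le_of_lt_or_sameSeqTail {p p' : BExpr Act} (h : OC p' < OC p ∨ SameSeqTail p p') :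
    OC p' ≤ OC p :=
  h.elim le_of_lt fun h => h.OC_eq.ge

theorem OC_seq_of_isStarB_false {p q : BExpr Act} (hq : isStarB q = false) :
    OC (BExpr.seq p q) = OC q + 1 := by
  simp [OC, hq]

theorem BStep.OC_lt_or_sameSeqTail {p p' : BExpr Act} {a : Act} (h : BStep p a p') :
    OC p' < OC p ∨ SameSeqTail p p' := by
  induction h with
  | act => left; simp [OC]
  | altl _ ih =>
    have := OC_le_of_lt_or_sameSeqTail ih
    left; simp only [OC]; omega
  | altr _ ih =>
    have := OC_le_of_lt_or_sameSeqTail ih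
    left; simp only [OC]; omega
  | seql => exact .inr ⟨_, _, _, rfl, rfl⟩
  | @seqr _ q _ _ _ hq ih =>
    cases q with
    | star => cases hq; exact .inr ⟨_, _, _, rfl, rfl⟩
    | _ =>
      have := OC_le_of_lt_or_sameSeqTail ih
      left; rw [OC_seq_of_isStarB_false rfl]; omega
  | star => left; simp [OC, isStarB]

theorem BStepAny.OC_lt_or_sameSeqTail {p p' : BExpr Act} (h : BStepAny p p') :
    OC p' < OC p ∨ SameSeqTail p p' :=
  let ⟨_, h⟩ := h
  h.OC_lt_or_sameSeqTail

theorem OC_lt_or_sameSeqTail_of_transGen {p p' : BExpr Act}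
    (h : Relation.TransGen BStepAny p p') : OC p' < OC p ∨ SameSeqTail p p' := by
  induction h with
  | single hs => exact hs.OC_lt_or_sameSeqTail
  | tail _ hs ih =>
    rcases ih with ih | ih <;> rcases hs.OC_lt_or_sameSeqTail with hs' | hs'
    · exact .inl (hs'.trans ih)
    · exact .inl (hs'.OC_eq ▸ ih)
    · exact .inl (ih.OC_eq ▸ hs')
    · exact .inr (ih.trans hs')

theorem OC_monotonic_general {Act : Type} {p p' : BExpr Act}
    (h : Relation.TransGen BStepAny p p') :
    OC p' ≤ OC p ∧
      (OC p = OC p' →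
        ∃ p₁ p₁' q : BExpr Act, p = BExpr.seq p₁ q ∧ p' = BExpr.seq p₁' q) := by
  rcases OC_lt_or_sameSeqTail_of_transGen h with hlt | htail
  · exact ⟨hlt.le, fun heq => absurd heq hlt.ne'⟩
  · exact ⟨htail.OC_eq.ge, fun _ => htail⟩

/-- If `p →⁺ p'`, then `OC p ≥ OC p'`; moreover, if `OC p = OC p'`,
then `p = p₁ · q` and `p' = p₁' · q` for some `p₁`, `p₁'` and `q`. -/
theorem OC_monotonic {Act : Type} [Nonempty Act] {p p' : BExpr Act}
    (h : Relation.TransGen BStepAny p p') :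
    OC p' ≤ OC p ∧
      (OC p = OC p' →
        ∃ p₁ p₁' q : BExpr Act, p = BExpr.seq p₁ q ∧ p' = BExpr.seq p₁' q) :=
  OC_monotonic_general h
end

section
/- If C is a non-trivial strongly connected component in BPA*01, then there exist a set of BPA*01 expressions C' and a BPA*01 expression q such that C = C'·q, where C'·q = {p·q | p ∈ C'}. -/
variable {Act : Type}

/-!
Every transition target is `ε` or a sequential composition, and `ε` is a dead end, so in a
non-trivial SCC every state has a predecessor in the SCC and is therefore of the form `u · q`.
The tail `q` never changes along a cycle: a step `u · q → s` either keeps it (`u → u'`) or enters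
`q`. Entering `q = z*` yields `z' · z*`, again with tail `q`; otherwise it strictly lowers the
measure `OC`, which never increases along transitions, so the cycle could not be closed.
-/

theorem BStep.oc_le {p p' : BExpr Act} {a : Act} (h : BStep p a p') : OC p' ≤ OC p := by
  induction h with
  | act => simp [OC]
  | altl _ ih => simp only [OC]; omega
  | altr _ ih => simp only [OC]; omega
  | seql _ _ => exact le_rfl
  | @seqr _ q _ _ _ h ih =>
      cases q
      case star => cases h; simp [OC, isStarB]
      all_goals simp only [OC, isStarB, Bool.false_eq_true, if_false] at ih ⊢; omega
  | star _ _ => simp [OC, isStarB]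

theorem BReach.oc_le {p p' : BExpr Act} (h : BReach p p') : OC p' ≤ OC p := by
  induction h with
  | refl => exact le_rfl
  | tail _ hstep ih => exact (hstep.choose_spec.oc_le).trans ih

theorem BStep.eq_emp_or_seq {p p' : BExpr Act} {a : Act} (h : BStep p a p') :
    p' = BExpr.emp ∨ ∃ u v, p' = BExpr.seq u v := by
  induction h with
  | act => exact Or.inl rfl
  | altl _ ih | altr _ ih | seqr _ _ ih => exact ih
  | seql _ _ | star _ _ => exact Or.inr ⟨_, _, rfl⟩

theorem BReach.eq_emp_of_emp {x : BExpr Act} (h : BReach BExpr.emp x) : x = BExpr.emp := by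
  rcases Relation.ReflTransGen.cases_head h with rfl | ⟨_, ⟨_, hstep⟩, _⟩
  · rfl
  · cases hstep

theorem BStep.seq_tail_of_reach_back {u q s : BExpr Act} {a : Act}
    (h : BStep (BExpr.seq u q) a s) (hback : BReach s (BExpr.seq u q)) :
    ∃ u', s = BExpr.seq u' q := by
  cases h with
  | seql _ => exact ⟨_, rfl⟩
  | seqr _ hq =>
      cases q
      case star z => cases hq; exact ⟨_, rfl⟩
      all_goals
        have h_enter := hq.oc_le
        have h_back := hback.oc_le
        simp only [OC, isStarB, Bool.false_eq_true, if_false] at h_enter h_back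
        omega

theorem BReach.seq_tail_of_reach_back {u q s : BExpr Act}
    (h : BReach (BExpr.seq u q) s) (hback : BReach s (BExpr.seq u q)) :
    ∃ u', s = BExpr.seq u' q := by
  induction h with
  | refl => exact ⟨u, rfl⟩
  | @tail b c hb hstep ih =>
      obtain ⟨a, hst⟩ := hstep
      obtain ⟨u', rfl⟩ := ih (.head ⟨a, hst⟩ hback)
      exact hst.seq_tail_of_reach_back (hback.trans hb)

namespace IsSCC

variable {C : Set (BExpr Act)}

theorem nonempty (hC : IsSCC C) : C.Nonempty := by
  by_contra h
  rw [Set.not_nonempty_iff_eq_empty] at h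
  subst h
  exact Set.singleton_ne_empty BExpr.emp <|
    hC.2 {BExpr.emp} (Set.empty_subset _) (by rintro _ rfl _ rfl; exact .refl)

theorem mem_of_reach_of_reach (hC : IsSCC C) {s x : BExpr Act} (hs : s ∈ C)
    (hsx : BReach s x) (hxs : BReach x s) : x ∈ C := by
  have hD : insert x C = C := hC.2 (insert x C) (Set.subset_insert x C) <| by
    rintro a (rfl | ha) b (rfl | hb)
    · exact .refl
    · exact hxs.trans (hC.1 s hs b hb)
    · exact (hC.1 a ha s hs).trans hsx
    · exact hC.1 a ha b hb
  exact hD ▸ Set.mem_insert x C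

theorem exists_step_to (hC : IsSCC C) (hnt : ¬ IsTrivialSCC C) {s : BExpr Act} (hs : s ∈ C) :
    ∃ x ∈ C, BStepAny x s := by
  by_cases h : ∃ t ∈ C, t ≠ s
  · obtain ⟨t, ht, hts⟩ := h
    rcases Relation.ReflTransGen.cases_tail (hC.1 t ht s hs) with heq | ⟨x, htx, hxs⟩
    · exact absurd heq.symm hts
    · exact ⟨x, hC.mem_of_reach_of_reach hs ((hC.1 s hs t ht).trans htx) (.single hxs), hxs⟩
  · push Not at h
    have hCs : C = {s} := Set.eq_singleton_iff_unique_mem.mpr ⟨hs, h⟩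
    refine ⟨s, hs, ?_⟩
    by_contra hno_loop
    exact hnt ⟨s, hCs, hno_loop⟩

theorem exists_seq_eq (hC : IsSCC C) (hnt : ¬ IsTrivialSCC C) {s : BExpr Act} (hs : s ∈ C) :
    ∃ u v, s = BExpr.seq u v := by
  obtain ⟨x, hx, a, hxs⟩ := hC.exists_step_to hnt hs
  rcases hxs.eq_emp_or_seq with rfl | hseq
  · have hx_emp : x = BExpr.emp := (hC.1 _ hs _ hx).eq_emp_of_emp
    subst hx_emp
    cases hxs
  · exact hseq

end IsSCC

theorem scc_seq_general {Act : Type} {C : Set (BExpr Act)}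
    (hC : IsSCC C) (hnt : ¬ IsTrivialSCC C) :
    ∃ (C' : Set (BExpr Act)) (q : BExpr Act), C = seqSet C' q := by
  obtain ⟨s₀, hs₀⟩ := hC.nonempty
  obtain ⟨u₀, q, rfl⟩ := hC.exists_seq_eq hnt hs₀
  refine ⟨{u | BExpr.seq u q ∈ C}, q, Set.ext fun s => ⟨fun hs => ?_, ?_⟩⟩
  · obtain ⟨u, rfl⟩ := (hC.1 _ hs₀ s hs).seq_tail_of_reach_back (hC.1 s hs _ hs₀)
    exact ⟨u, hs, rfl⟩
  · rintro ⟨u, hu, rfl⟩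
    exact hu

/-- Every non-trivial strongly connected component in BPA*01 is of
the form `C' · q = { p · q | p ∈ C' }`. -/
theorem scc_seq {Act : Type} [Nonempty Act] {C : Set (BExpr Act)}
    (hC : IsSCC C) (hnt : ¬ IsTrivialSCC C) :
    ∃ (C' : Set (BExpr Act)) (q : BExpr Act), C = seqSet C' q :=
  scc_seq_general hC hnt
end

section
/- If C is a basic strongly connected component in BPA*01, then Extⁿ(p) = ∅ for all p ∈ C, i.e. no state of C has a normed exit transition. -/
variable {Act : Type}

lemma BStep.seq_star_inv {p q r : BExpr Act} {a : Act}
    (h : BStep (BExpr.seq p (BExpr.star q)) a r) :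
    ∃ p', r = BExpr.seq p' (BExpr.star q) ∧ (BStep p a p' ∨ (BTerm p ∧ BStep q a p')) := by
  cases h with
  | seql h => exact ⟨_, rfl, Or.inl h⟩
  | seqr ht h =>
      cases h with
      | star h => exact ⟨_, rfl, Or.inr ⟨ht, h⟩⟩

lemma BReach.exists_eq_seq_star {p q r : BExpr Act}
    (h : BReach (BExpr.seq p (BExpr.star q)) r) : ∃ p', r = BExpr.seq p' (BExpr.star q) := by
  induction h with
  | refl => exact ⟨p, rfl⟩
  | tail _ hstep ih =>
      obtain ⟨p', rfl⟩ := ih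
      obtain ⟨a, hstep⟩ := hstep
      obtain ⟨p'', rfl, -⟩ := hstep.seq_star_inv
      exact ⟨p'', rfl⟩

lemma BTerm.of_seq_left {p q : BExpr Act} (h : BTerm (BExpr.seq p q)) : BTerm p := by
  cases h with | seq h _ => exact h

lemma BReach.seq_left {p p' : BExpr Act} (q : BExpr Act) (h : BReach p p') :
    BReach (BExpr.seq p q) (BExpr.seq p' q) := by
  induction h with
  | refl => exact Relation.ReflTransGen.refl
  | tail _ hstep ih =>
      obtain ⟨a, hstep⟩ := hstep
      exact ih.tail ⟨a, BStep.seql hstep⟩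

lemma mem_seqSet_iff {C : Set (BExpr Act)} {p q : BExpr Act} :
    BExpr.seq p q ∈ seqSet C q ↔ p ∈ C :=
  Function.Injective.mem_set_image fun _ _ h => (BExpr.seq.inj h).1

lemma IsSCC.mem_of_reach_of_reach_s5 {C : Set (BExpr Act)} (hC : IsSCC C) {x y z : BExpr Act}
    (hx : x ∈ C) (hy : y ∈ C) (hxz : BReach x z) (hzy : BReach z y) : z ∈ C := by
  have hmutual : ∀ s ∈ insert z C, ∀ t ∈ insert z C, BReach s t := by
    have to_z : ∀ s ∈ insert z C, BReach s z := by
      rintro s (rfl | hs)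
      · exact Relation.ReflTransGen.refl
      · exact (hC.1 s hs x hx).trans hxz
    have from_z : ∀ t ∈ insert z C, BReach z t := by
      rintro t (rfl | ht)
      · exact Relation.ReflTransGen.refl
      · exact hzy.trans (hC.1 y hy t ht)
    exact fun s hs t ht => (to_z s hs).trans (from_z t ht)
  rw [← hC.2 _ (Set.subset_insert z C) hmutual]
  exact Set.mem_insert z C

section NoRestart

variable {C : Set (BExpr Act)} {q : BExpr Act}

/-- A path inside `C · q*` cannot use a restart step, so it projects to a path of left factors. -/
lemma reach_of_reach_seq_star (hC : IsSCC (seqSet C (BExpr.star q)))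
    (hq : ∀ a s, BStep q a s → s ∉ C) {u v : BExpr Act} (hu : u ∈ C) (hv : v ∈ C)
    (h : BReach (BExpr.seq u (BExpr.star q)) (BExpr.seq v (BExpr.star q))) : BReach u v := by
  generalize hx : BExpr.seq u (BExpr.star q) = x at h
  induction h using Relation.ReflTransGen.head_induction_on generalizing u with
  | refl =>
      cases (BExpr.seq.inj hx).1
      exact Relation.ReflTransGen.refl
  | head hstep hrest ih =>
      subst hx
      obtain ⟨a, hstep⟩ := hstep
      obtain ⟨s, rfl, hmove⟩ := hstep.seq_star_inv
      have hs : s ∈ C := mem_seqSet_iff.mp <|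
        hC.mem_of_reach_of_reach_s5 (mem_seqSet_iff.mpr hu) (mem_seqSet_iff.mpr hv)
          (Relation.ReflTransGen.single ⟨a, hstep⟩) hrest
      rcases hmove with hleft | ⟨-, hrestart⟩
      · exact (Relation.ReflTransGen.single ⟨a, hleft⟩).trans (ih hs rfl)
      · exact absurd hs (hq a s hrestart)

lemma IsSCC.of_seqSet_star (hC : IsSCC (seqSet C (BExpr.star q)))
    (hq : ∀ a s, BStep q a s → s ∉ C) : IsSCC C := by
  refine ⟨fun u hu v hv => reach_of_reach_seq_star hC hq hu hv
    (hC.1 _ (mem_seqSet_iff.mpr hu) _ (mem_seqSet_iff.mpr hv)), fun D hCD hD => ?_⟩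
  have hmutual : ∀ s ∈ seqSet D (BExpr.star q), ∀ t ∈ seqSet D (BExpr.star q), BReach s t := by
    rintro _ ⟨s, hs, rfl⟩ _ ⟨t, ht, rfl⟩
    exact (hD s hs t ht).seq_left _
  have heq := hC.2 _ (Set.image_mono hCD) hmutual
  refine hCD.antisymm' fun r hr => ?_
  rw [← mem_seqSet_iff (q := BExpr.star q), ← heq]
  exact mem_seqSet_iff.mpr hr

end NoRestart

theorem basic_scc_no_extn_general {Act : Type} {C : Set (BExpr Act)}
    (hC : IsSCC C) (hb : IsBasic C) :
    ∀ p ∈ C, ExtN C p = ∅ := by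
  obtain ⟨C', q, rfl, hC'⟩ := hb
  obtain ⟨a₀, s, hqs, hs⟩ : ∃ a s, BStep q a s ∧ s ∈ C' := by
    by_contra! h
    exact hC' (hC.of_seqSet_star h)
  rintro _ ⟨p, hp, rfl⟩
  refine Set.eq_empty_of_forall_notMem ?_
  rintro ⟨a, t⟩ ⟨hstep, htC, w, hw, hwt⟩
  obtain ⟨t', rfl, -⟩ := hstep.seq_star_inv
  obtain ⟨u, rfl⟩ := hw.exists_eq_seq_star
  have hrestart : BStepAny (BExpr.seq u (BExpr.star q)) (BExpr.seq s (BExpr.star q)) :=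
    ⟨a₀, BStep.seqr hwt.of_seq_left (BStep.star hqs)⟩
  exact htC <| hC.mem_of_reach_of_reach_s5 (mem_seqSet_iff.mpr hp) (mem_seqSet_iff.mpr hs)
    (Relation.ReflTransGen.single ⟨a, hstep⟩) (hw.tail hrestart)

/-- If `C` is a basic strongly connected component in BPA*01, then
no state of `C` has a normed exit transition. -/
theorem basic_scc_no_extn {Act : Type} [Nonempty Act] {C : Set (BExpr Act)}
    (hC : IsSCC C) (hnt : ¬ IsTrivialSCC C) (hb : IsBasic C) :
    ∀ p ∈ C, ExtN C p = ∅ :=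
  basic_scc_no_extn_general hC hb
end

section
/- PA*01 is less expressive than the union over all communication functions γ of ACP*01 modulo bisimilarity: every PA*01 expression is bisimilar to an ACP*01 expression for some communication function γ (e.g. the everywhere-undefined one), and there exist a communication function γ and an ACP*01 expression (for instance ε·(a·b)*·d ‖ c with γ(b,c) = e, for distinct actions a, b, c, d, e) that is not bisimilar to any PA*01 expression. -/
variable {Act : Type}

/-!
Under `γ(b, c) = e` the expression `ε·(a·b)*·d ‖ c` behaves like the six-state automaton `Spec`,
in which `x₀` and `x₁` form an `a·b`-loop that can be left by `c`, by `d` (from `x₀`) and by the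
communication `e` (from `x₁`), which disables `c`. A PA*01 expression bisimilar to `x₀` would have
an infinite run all of whose states are bisimilar to `x₀` or `x₁`. Induction on the expression,
carrying a sequential continuation, shows that no such run exists: in `p + q` and `p·r` it
eventually runs inside a component; in `p*` an iteration cannot be restarted inside the loop, so it
runs inside `p`; and in `p ‖ q` it moves one side only, while the other side is either inert, and
can be absorbed into the continuation, or can only perform `c`, which no step of the loop disables.
-/

open Expr Function

namespace Bisimilar

variable {S₁ S₂ S₃ : Type} {st₁ : S₁ → Act → S₁ → Prop} {t₁ : S₁ → Prop}
  {st₂ : S₂ → Act → S₂ → Prop} {t₂ : S₂ → Prop} {st₃ : S₃ → Act → S₃ → Prop} {t₃ : S₃ → Prop}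
  {x : S₁} {y : S₂} {z : S₃}

theorem refl (st : S₁ → Act → S₁ → Prop) (t : S₁ → Prop) (x : S₁) : Bisimilar st t st t x x :=
  ⟨Eq, by rintro s _ rfl; exact ⟨fun _ s' h => ⟨s', h, rfl⟩, fun _ s' h => ⟨s', h, rfl⟩, Iff.rfl⟩,
    rfl⟩

theorem symm (h : Bisimilar st₁ t₁ st₂ t₂ x y) : Bisimilar st₂ t₂ st₁ t₁ y x := by
  obtain ⟨R, hR, hxy⟩ := h
  refine ⟨flip R, fun u s hsu => ?_, hxy⟩
  obtain ⟨forth, back, term⟩ := hR s u hsu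
  exact ⟨back, forth, term.symm⟩

theorem trans (h₁ : Bisimilar st₁ t₁ st₂ t₂ x y) (h₂ : Bisimilar st₂ t₂ st₃ t₃ y z) :
    Bisimilar st₁ t₁ st₃ t₃ x z := by
  obtain ⟨R₁, hR₁, hxy⟩ := h₁
  obtain ⟨R₂, hR₂, hyz⟩ := h₂
  refine ⟨Relation.Comp R₁ R₂, ?_, y, hxy, hyz⟩
  rintro s u ⟨m, hsm, hmu⟩
  obtain ⟨forth₁, back₁, term₁⟩ := hR₁ s m hsm
  obtain ⟨forth₂, back₂, term₂⟩ := hR₂ m u hmu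
  refine ⟨fun α s' hs => ?_, fun α u' hu => ?_, term₁.trans term₂⟩
  · obtain ⟨m', hm, hsm'⟩ := forth₁ α s' hs
    obtain ⟨u', hu, hmu'⟩ := forth₂ α m' hm
    exact ⟨u', hu, m', hsm', hmu'⟩
  · obtain ⟨m', hm, hmu'⟩ := back₂ α u' hu
    obtain ⟨s', hs, hsm'⟩ := back₁ α m' hm
    exact ⟨s', hs, m', hsm', hmu'⟩

theorem forth (h : Bisimilar st₁ t₁ st₂ t₂ x y) {α : Act} {x' : S₁} (hs : st₁ x α x') :
    ∃ y', st₂ y α y' ∧ Bisimilar st₁ t₁ st₂ t₂ x' y' := by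
  obtain ⟨R, hR, hxy⟩ := h
  obtain ⟨y', hy', hr⟩ := (hR x y hxy).1 α x' hs
  exact ⟨y', hy', R, hR, hr⟩

theorem back (h : Bisimilar st₁ t₁ st₂ t₂ x y) {α : Act} {y' : S₂} (hs : st₂ y α y') :
    ∃ x', st₁ x α x' ∧ Bisimilar st₁ t₁ st₂ t₂ x' y' :=
  (h.symm.forth hs).imp fun _ h => ⟨h.1, h.2.symm⟩

theorem term_iff (h : Bisimilar st₁ t₁ st₂ t₂ x y) : t₁ x ↔ t₂ y :=
  let ⟨_, hR, hxy⟩ := h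
  (hR x y hxy).2.2

end Bisimilar

section Inversion

variable {γ : Act → Act → Option Act} {p q u : Expr Act} {α o : Act}

theorem not_step_dl : ¬ Step γ dl α u := nofun

theorem not_step_emp : ¬ Step γ emp α u := nofun

theorem not_term_act : ¬ Term (act o : Expr Act) := nofun

theorem step_act_iff : Step γ (act o) α u ↔ α = o ∧ u = emp :=
  ⟨by rintro ⟨⟩; exact ⟨rfl, rfl⟩, by rintro ⟨rfl, rfl⟩; exact .act⟩

theorem step_alt_iff : Step γ (alt p q) α u ↔ Step γ p α u ∨ Step γ q α u :=
  ⟨fun | .altl h => .inl h | .altr h => .inr h, fun | .inl h => .altl h | .inr h => .altr h⟩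

theorem step_seq_iff :
    Step γ (seq p q) α u ↔ (∃ p', Step γ p α p' ∧ u = seq p' q) ∨ (Term p ∧ Step γ q α u) := by
  constructor
  · exact fun | .seql h => .inl ⟨_, h, rfl⟩ | .seqr hp h => .inr ⟨hp, h⟩
  · rintro (⟨p', h, rfl⟩ | ⟨hp, h⟩)
    exacts [.seql h, .seqr hp h]

theorem step_star_iff : Step γ (star p) α u ↔ ∃ p', Step γ p α p' ∧ u = seq p' (star p) :=
  ⟨fun | .star h => ⟨_, h, rfl⟩, by rintro ⟨p', h, rfl⟩; exact .star h⟩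

theorem step_par_iff : Step γ (par p q) α u ↔
    (∃ p', Step γ p α p' ∧ u = par p' q) ∨ (∃ q', Step γ q α q' ∧ u = par p q') ∨
      ∃ p' q' β β', Step γ p β p' ∧ Step γ q β' q' ∧ γ β β' = some α ∧ u = par p' q' := by
  constructor
  · exact fun
      | .parl h => .inl ⟨_, h, rfl⟩
      | .parr h => .inr (.inl ⟨_, h, rfl⟩)
      | .comm h h' hγ => .inr (.inr ⟨_, _, _, _, h, h', hγ, rfl⟩)
  · rintro (⟨p', h, rfl⟩ | ⟨q', h, rfl⟩ | ⟨p', q', β, β', h, h', hγ, rfl⟩)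
    exacts [.parl h, .parr h, .comm h h' hγ]

theorem term_seq_iff : Term (seq p q) ↔ Term p ∧ Term q :=
  ⟨fun | .seq hp hq => ⟨hp, hq⟩, fun h => .seq h.1 h.2⟩

theorem term_par_iff : Term (par p q) ↔ Term p ∧ Term q :=
  ⟨fun | .par hp hq => ⟨hp, hq⟩, fun h => .par h.1 h.2⟩

end Inversion

section Reach

variable {γ : Act → Act → Option Act} {p q s x y : Expr Act} {α o : Act}

theorem Reach.eq_of_inert (h : Reach γ p x) (hp : ∀ α p', ¬ Step γ p α p') : x = p := by
  induction h with
  | refl => rfl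
  | tail _ hs ih => subst ih; exact (hp _ _ hs.choose_spec).elim

theorem Reach.of_act_step (h : Reach γ (act o) x) (hs : StepAny γ x y) : y = emp := by
  induction h generalizing y with
  | refl => exact (step_act_iff.1 hs.choose_spec).2
  | tail _ hs' ih => rw [ih hs'] at hs; exact (not_step_emp hs.choose_spec).elim

theorem Reach.of_alt_step (h : Reach γ (alt p q) x) (hs : StepAny γ x y) :
    Reach γ p y ∨ Reach γ q y := by
  induction h generalizing y with
  | refl =>
    obtain ⟨β, hs⟩ := hs
    exact (step_alt_iff.1 hs).imp (fun h => .single ⟨β, h⟩) (fun h => .single ⟨β, h⟩)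
  | tail _ hs' ih => exact (ih hs').imp (·.tail hs) (·.tail hs)

theorem Reach.of_seq (h : Reach γ (seq p q) x) :
    (∃ p', Reach γ p p' ∧ x = seq p' q) ∨ Reach γ q x := by
  induction h with
  | refl => exact .inl ⟨p, .refl, rfl⟩
  | tail _ hs ih =>
    rcases ih with ⟨p', hp', rfl⟩ | hq
    · obtain ⟨β, hs⟩ := hs
      rcases step_seq_iff.1 hs with ⟨p'', h, rfl⟩ | ⟨-, h⟩
      exacts [.inl ⟨p'', hp'.tail ⟨β, h⟩, rfl⟩, .inr (.single ⟨β, h⟩)]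
    · exact .inr (hq.tail hs)

theorem Reach.of_star_step (h : Reach γ (star s) x) (hs : Step γ x α y) :
    ∃ z, Reach γ s z ∧ y = seq z (star s) := by
  induction h generalizing α y with
  | refl =>
    obtain ⟨s', h, rfl⟩ := step_star_iff.1 hs
    exact ⟨s', .single ⟨α, h⟩, rfl⟩
  | tail _ hs' ih =>
    obtain ⟨z, hz, rfl⟩ := ih hs'.choose_spec
    rcases step_seq_iff.1 hs with ⟨z', h, rfl⟩ | ⟨-, h⟩
    · exact ⟨z', hz.tail ⟨α, h⟩, rfl⟩
    · obtain ⟨s', hs', rfl⟩ := step_star_iff.1 h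
      exact ⟨s', .single ⟨α, hs'⟩, rfl⟩

theorem Reach.of_par (h : Reach γ (par p q) x) :
    ∃ p' q', Reach γ p p' ∧ Reach γ q q' ∧ x = par p' q' := by
  induction h with
  | refl => exact ⟨p, q, .refl, .refl, rfl⟩
  | tail _ hs ih =>
    obtain ⟨p', q', hp, hq, rfl⟩ := ih
    obtain ⟨β, hs⟩ := hs
    rcases step_par_iff.1 hs with ⟨p'', h, rfl⟩ | ⟨q'', h, rfl⟩ | ⟨p'', q'', _, _, h, h', -, rfl⟩
    · exact ⟨p'', q', hp.tail ⟨β, h⟩, hq, rfl⟩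
    · exact ⟨p', q'', hp, hq.tail ⟨β, h⟩, rfl⟩
    · exact ⟨p'', q'', hp.tail ⟨_, h⟩, hq.tail ⟨_, h'⟩, rfl⟩

end Reach

local notation:50 x " ≈[" γ "] " y => Bisimilar (Step γ) Term (Step γ) Term x y

section Laws

variable {γ : Act → Act → Option Act}

theorem bisim_seq_assoc (p q r : Expr Act) : seq (seq p q) r ≈[γ] seq p (seq q r) := by
  refine ⟨fun x y => (∃ p', x = seq (seq p' q) r ∧ y = seq p' (seq q r)) ∨ x = y, ?_,
    .inl ⟨p, rfl, rfl⟩⟩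
  rintro x y (⟨p', rfl, rfl⟩ | rfl)
  · refine ⟨fun α x' hx => ?_, fun α y' hy => ?_, by simp only [term_seq_iff, and_assoc]⟩
    · rcases step_seq_iff.1 hx with ⟨t, ht, rfl⟩ | ⟨htm, hr⟩
      · rcases step_seq_iff.1 ht with ⟨p'', hp'', rfl⟩ | ⟨htp, hq⟩
        · exact ⟨_, .seql hp'', .inl ⟨p'', rfl, rfl⟩⟩
        · exact ⟨_, .seqr htp (.seql hq), .inr rfl⟩
      · obtain ⟨htp, htq⟩ := term_seq_iff.1 htm
        exact ⟨x', .seqr htp (.seqr htq hr), .inr rfl⟩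
    · rcases step_seq_iff.1 hy with ⟨p'', hp'', rfl⟩ | ⟨htp, hqr⟩
      · exact ⟨_, .seql (.seql hp''), .inl ⟨p'', rfl, rfl⟩⟩
      · rcases step_seq_iff.1 hqr with ⟨q', hq, rfl⟩ | ⟨htq, hr⟩
        · exact ⟨_, .seql (.seqr htp hq), .inr rfl⟩
        · exact ⟨y', .seqr (.seq htp htq) hr, .inr rfl⟩
  · exact ⟨fun _ s' h => ⟨s', h, .inr rfl⟩, fun _ s' h => ⟨s', h, .inr rfl⟩, Iff.rfl⟩

theorem bisim_seq_emp (p : Expr Act) : seq p emp ≈[γ] p := by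
  refine ⟨fun x y => x = seq y emp, ?_, rfl⟩
  rintro _ y rfl
  refine ⟨fun α x' hx => ?_, fun α y' hy => ⟨seq y' emp, .seql hy, rfl⟩, ?_⟩
  · rcases step_seq_iff.1 hx with ⟨y', hy, rfl⟩ | ⟨-, h⟩
    exacts [⟨y', hy, rfl⟩, (not_step_emp h).elim]
  · simp only [term_seq_iff, and_iff_left Term.emp]

theorem Bisimilar.seq_right {p q : Expr Act} (h : p ≈[γ] q) (r : Expr Act) :
    seq p r ≈[γ] seq q r := by
  refine ⟨fun x y => (∃ p' q', (p' ≈[γ] q') ∧ x = seq p' r ∧ y = seq q' r) ∨ x = y, ?_,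
    .inl ⟨p, q, h, rfl, rfl⟩⟩
  rintro x y (⟨p', q', h, rfl, rfl⟩ | rfl)
  · refine ⟨fun α x' hx => ?_, fun α y' hy => ?_, ?_⟩
    · rcases step_seq_iff.1 hx with ⟨p'', hp, rfl⟩ | ⟨ht, hr⟩
      · obtain ⟨q'', hq, h'⟩ := h.forth hp
        exact ⟨_, .seql hq, .inl ⟨p'', q'', h', rfl, rfl⟩⟩
      · exact ⟨x', .seqr (h.term_iff.1 ht) hr, .inr rfl⟩
    · rcases step_seq_iff.1 hy with ⟨q'', hq, rfl⟩ | ⟨ht, hr⟩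
      · obtain ⟨p'', hp, h'⟩ := h.back hq
        exact ⟨_, .seql hp, .inl ⟨p'', q'', h', rfl, rfl⟩⟩
      · exact ⟨y', .seqr (h.term_iff.2 ht) hr, .inr rfl⟩
    · simp only [term_seq_iff, h.term_iff]
  · exact ⟨fun _ s' h => ⟨s', h, .inr rfl⟩, fun _ s' h => ⟨s', h, .inr rfl⟩, Iff.rfl⟩

theorem bisim_par_comm (hγ : ∀ α β, γ α β = γ β α) (p q : Expr Act) : par p q ≈[γ] par q p := by
  refine ⟨fun x y => ∃ p' q', x = par p' q' ∧ y = par q' p', ?_, ⟨p, q, rfl, rfl⟩⟩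
  have swap : ∀ {p' q' x' : Expr Act} {α}, Step γ (par p' q') α x' →
      ∃ y', Step γ (par q' p') α y' ∧ ∃ p'' q'', x' = par p'' q'' ∧ y' = par q'' p'' := by
    intro p' q' x' α hx
    rcases step_par_iff.1 hx with ⟨p'', h, rfl⟩ | ⟨q'', h, rfl⟩ | ⟨p'', q'', β, β', h, h', hc, rfl⟩
    · exact ⟨_, .parr h, _, _, rfl, rfl⟩
    · exact ⟨_, .parl h, _, _, rfl, rfl⟩
    · exact ⟨_, .comm h' h (hγ β' β ▸ hc), _, _, rfl, rfl⟩
  rintro _ _ ⟨p', q', rfl, rfl⟩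
  refine ⟨fun α x' hx => swap hx, fun α y' hy => ?_, by simp only [term_par_iff, and_comm]⟩
  obtain ⟨x', hx, q'', p'', rfl, rfl⟩ := swap hy
  exact ⟨_, hx, p'', q'', rfl, rfl⟩

theorem bisim_par_seq_of_inert {w k : Expr Act} (hw : ∀ α w', ¬ Step γ w α w')
    (hk : ∀ α k', ¬ Step γ k α k') (hwk : Term w ↔ Term k) (p : Expr Act) :
    par p w ≈[γ] seq p k := by
  refine ⟨fun x y => ∃ p', x = par p' w ∧ y = seq p' k, ?_, ⟨p, rfl, rfl⟩⟩
  rintro _ _ ⟨p', rfl, rfl⟩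
  refine ⟨fun α x' hx => ?_, fun α y' hy => ?_, by rw [term_par_iff, term_seq_iff, hwk]⟩
  · rcases step_par_iff.1 hx with ⟨p'', h, rfl⟩ | ⟨_, h, -⟩ | ⟨_, _, _, _, -, h, -⟩
    exacts [⟨_, .seql h, p'', rfl, rfl⟩, (hw _ _ h).elim, (hw _ _ h).elim]
  · rcases step_seq_iff.1 hy with ⟨p'', h, rfl⟩ | ⟨-, h⟩
    exacts [⟨_, .parl h, p'', rfl, rfl⟩, (hk _ _ h).elim]

theorem exists_bisim_par_seq_of_inert {w : Expr Act} (hw : ∀ α w', ¬ Step γ w α w') :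
    ∃ k, ∀ p, par p w ≈[γ] seq p k := by
  by_cases htw : Term w
  · exact ⟨emp, bisim_par_seq_of_inert hw (fun _ _ => not_step_emp) (iff_of_true htw .emp)⟩
  · exact ⟨dl, bisim_par_seq_of_inert hw (fun _ _ => not_step_dl) (iff_of_false htw nofun)⟩

end Laws

abbrev noComm : Act → Act → Option Act := fun _ _ => none

section Steps

variable {γ : Act → Act → Option Act} {p q r s w u : Expr Act} {α : Act}

theorem step_par_noComm_iff : Step noComm (par p q) α u ↔
    (∃ p', Step noComm p α p' ∧ u = par p' q) ∨ (∃ q', Step noComm q α q' ∧ u = par p q') := by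
  simp only [step_par_iff, noComm, reduceCtorEq, false_and, and_false, exists_false, or_false]

theorem Step.seqr_of_term (hs : Step γ (seq p r) α w) (hw : Term w) (hr : ¬ Term r) :
    Term p ∧ Step γ r α w := by
  rcases step_seq_iff.1 hs with ⟨p', -, rfl⟩ | h
  exacts [(hr (term_seq_iff.1 hw).2).elim, h]

theorem Step.of_seq_seq_star (hs : Step γ (seq (seq p (Expr.star s)) r) α w) :
    (∃ p', w = seq (seq p' (Expr.star s)) r) ∨ (Term p ∧ Step γ r α w) := by
  rcases step_seq_iff.1 hs with ⟨x, hx, rfl⟩ | ⟨ht, h⟩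
  · rcases step_seq_iff.1 hx with ⟨p', -, rfl⟩ | ⟨-, h⟩
    · exact .inl ⟨p', rfl⟩
    · obtain ⟨s', -, rfl⟩ := step_star_iff.1 h
      exact .inl ⟨s', rfl⟩
  · exact .inr ⟨(term_seq_iff.1 ht).1, h⟩

end Steps

inductive Label
  | a | b | c | d | e
  deriving DecidableEq

instance : Fintype Label := ⟨⟨[Label.a, .b, .c, .d, .e], by decide⟩, fun l => by cases l <;> decide⟩

inductive Spec
  | x₀ | x₁ | y₀ | y₁ | z | t
  deriving DecidableEq

instance : Fintype Spec :=
  ⟨⟨[Spec.x₀, .x₁, .y₀, .y₁, .z, .t], by decide⟩, fun m => by cases m <;> decide⟩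

def Spec.next : Spec → Label → Option Spec
  | x₀, .a => some x₁
  | x₀, .c => some y₀
  | x₀, .d => some z
  | x₁, .b => some x₀
  | x₁, .c => some y₁
  | x₁, .e => some y₀
  | y₀, .a => some y₁
  | y₀, .d => some t
  | y₁, .b => some y₀
  | z, .c => some t
  | _, _ => none

def specLeft₀ (ι : Label → Act) : Expr Act :=
  seq (seq emp (star (seq (act (ι .a)) (act (ι .b))))) (act (ι .d))

def specLeft₁ (ι : Label → Act) : Expr Act :=
  seq (seq (seq emp (act (ι .b))) (star (seq (act (ι .a)) (act (ι .b))))) (act (ι .d))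

def Spec.toExpr (ι : Label → Act) : Spec → Expr Act
  | x₀ => par (specLeft₀ ι) (act (ι .c))
  | x₁ => par (specLeft₁ ι) (act (ι .c))
  | y₀ => par (specLeft₀ ι) emp
  | y₁ => par (specLeft₁ ι) emp
  | z => par emp (act (ι .c))
  | t => par emp emp

def Spec.Step (ι : Label → Act) (m : Spec) (α : Act) (m' : Spec) : Prop :=
  ∃ l, ι l = α ∧ m.next l = some m'

def Sim (ι : Label → Act) (P : Expr Act) (m : Spec) : Prop :=
  Bisimilar (Step noComm) Term (Spec.Step ι) (· = Spec.t) P m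

def OnLoop (ι : Label → Act) (P : Expr Act) : Prop := Sim ι P .x₀ ∨ Sim ι P .x₁

section Sim

variable {ι : Label → Act} {P P' Q : Expr Act} {m m' : Spec} {α β : Act} {l : Label}

theorem Sim.back (h : Sim ι P m) (hm : m.next l = some m') :
    ∃ P', Step noComm P (ι l) P' ∧ Sim ι P' m' :=
  Bisimilar.back h ⟨l, rfl, hm⟩

theorem Sim.forth_label (hι : Injective ι) (h : Sim ι P m) (hs : Step noComm P (ι l) P') :
    ∃ m', m.next l = some m' ∧ Sim ι P' m' := by
  obtain ⟨m', ⟨l', hl, hm⟩, h'⟩ := Bisimilar.forth h hs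
  exact ⟨m', hι hl ▸ hm, h'⟩

theorem Sim.not_step (hι : Injective ι) (h : Sim ι P m) (hm : m.next l = none)
    (hs : Step noComm P (ι l) P') : False := by
  obtain ⟨m', hm', -⟩ := h.forth_label hι hs
  rw [hm] at hm'
  cases hm'

theorem Sim.unique (hι : Injective ι) {m₁ m₂ : Spec} (h₁ : Sim ι P m₁) (h₂ : Sim ι P m₂) :
    m₁ = m₂ := by
  have enabled : ∀ {m₁ m₂}, Sim ι P m₁ → Sim ι P m₂ → ∀ l,
      (m₁.next l).isSome → (m₂.next l).isSome := by
    intro m₁ m₂ h₁ h₂ l hl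
    obtain ⟨_, hm⟩ := Option.isSome_iff_exists.1 hl
    obtain ⟨_, hs, -⟩ := h₁.back hm
    obtain ⟨_, hm', -⟩ := h₂.forth_label hι hs
    simp [hm']
  have separated : ∀ m₁ m₂ : Spec, (∀ l, (m₁.next l).isSome = (m₂.next l).isSome) → m₁ = m₂ := by
    decide
  exact separated m₁ m₂ fun l => Bool.eq_iff_iff.2 ⟨enabled h₁ h₂ l, enabled h₂ h₁ l⟩

theorem OnLoop.of_bisim (hQ : OnLoop ι Q) (h : P ≈[noComm] Q) : OnLoop ι P :=
  hQ.imp h.trans h.trans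

theorem OnLoop.exists_step (h : OnLoop ι P) : ∃ P', StepAny noComm P P' ∧ OnLoop ι P' := by
  rcases h with h | h
  · obtain ⟨P', hs, h'⟩ := h.back (l := .a) rfl
    exact ⟨P', ⟨_, hs⟩, .inr h'⟩
  · obtain ⟨P', hs, h'⟩ := h.back (l := .b) rfl
    exact ⟨P', ⟨_, hs⟩, .inl h'⟩

theorem OnLoop.step (hι : Injective ι) (h : OnLoop ι P) (h' : OnLoop ι P')
    (hs : Step noComm P α P') :
    (Sim ι P .x₀ ∧ Sim ι P' .x₁ ∧ α = ι .a) ∨ (Sim ι P .x₁ ∧ Sim ι P' .x₀ ∧ α = ι .b) := by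
  have table : ∀ (m : Spec) l m', m.next l = some m' → (m = .x₀ ∨ m = .x₁) →
      (m' = .x₀ ∨ m' = .x₁) → (m = .x₀ ∧ l = .a ∧ m' = .x₁) ∨ (m = .x₁ ∧ l = .b ∧ m' = .x₀) := by
    decide
  obtain ⟨m, hm, hP⟩ : ∃ m, (m = .x₀ ∨ m = .x₁) ∧ Sim ι P m := by
    rcases h with h | h
    exacts [⟨_, .inl rfl, h⟩, ⟨_, .inr rfl, h⟩]
  obtain ⟨m', ⟨l, rfl, hl⟩, hP'⟩ := Bisimilar.forth hP hs
  have hm' : m' = .x₀ ∨ m' = .x₁ := h'.imp (Sim.unique hι hP' ·) (Sim.unique hι hP' ·)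
  rcases table m l m' hl hm hm' with ⟨rfl, rfl, rfl⟩ | ⟨rfl, rfl, rfl⟩
  exacts [.inl ⟨hP, hP', rfl⟩, .inr ⟨hP, hP', rfl⟩]

theorem OnLoop.not_swap (hι : Injective ι) {P₀ P₁ P₂ : Expr Act} (h₀ : OnLoop ι P₀)
    (h₁ : OnLoop ι P₁) (h₂ : OnLoop ι P₂) (s₀₁ : Step noComm P₀ α P₁)
    (s₁₂ : Step noComm P₁ β P₂) (s : Step noComm P₀ β P') : False := by
  rcases h₀.step hι h₁ s₀₁ with ⟨hP₀, hP₁, -⟩ | ⟨hP₀, hP₁, -⟩ <;>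
    rcases h₁.step hι h₂ s₁₂ with ⟨hP₁', -, rfl⟩ | ⟨hP₁', -, rfl⟩
  · cases hP₁.unique hι hP₁'
  · exact hP₀.not_step hι rfl s
  · exact hP₀.not_step hι rfl s
  · cases hP₁.unique hι hP₁'

theorem exists_sim_x₁_x₀ (hι : Injective ι) {P : ℕ → Expr Act}
    (hs : ∀ i, StepAny noComm (P i) (P (i + 1))) (h : ∀ i, OnLoop ι (P i)) :
    ∃ i, Sim ι (P i) .x₁ ∧ Sim ι (P (i + 1)) .x₀ := by
  obtain ⟨_, s₀⟩ := hs 0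
  obtain ⟨_, s₁⟩ := hs 1
  rcases (h 1).step hι (h 2) s₁ with ⟨h₁, -, -⟩ | ⟨h₁, h₂, -⟩
  · rcases (h 0).step hι (h 1) s₀ with ⟨-, h₁', -⟩ | ⟨h₀, -, -⟩
    · cases h₁.unique hι h₁'
    · exact ⟨0, h₀, h₁⟩
  · exact ⟨1, h₁, h₂⟩

end Sim

/-- The continuation `R` lets the induction over the expression pass through `p·r` and `p*`,
whose runs continue inside `p` followed by `r·R`, resp. `p*·R`. -/
def LoopRun (ι : Label → Act) (R : Expr Act) (u : ℕ → Expr Act) : Prop :=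
  ∀ i, StepAny noComm (u i) (u (i + 1)) ∧ OnLoop ι (seq (u i) R)

def NoLoopRun (ι : Label → Act) (g : Expr Act) : Prop :=
  ∀ R u, Reach noComm g (u 0) → LoopRun ι R u → False

section LoopRun

variable {ι : Label → Act} {g p q r s x R : Expr Act} {u : ℕ → Expr Act} {α : Act}

theorem LoopRun.drop (hu : LoopRun ι R u) (k : ℕ) : LoopRun ι R (fun i => u (i + k)) :=
  fun i => by simpa only [Nat.add_right_comm i 1 k] using hu (i + k)

theorem LoopRun.reach (hu : LoopRun ι R u) (h0 : Reach noComm g (u 0)) (i : ℕ) :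
    Reach noComm g (u i) := by
  induction i with
  | zero => exact h0
  | succ i ih => exact ih.tail (hu i).1

theorem noLoopRun_of_inert (hg : ∀ α g', ¬ Step noComm g α g') : NoLoopRun ι g := by
  intro R u h0 hu
  obtain ⟨α, hs⟩ := (hu 0).1
  rw [h0.eq_of_inert hg] at hs
  exact hg α _ hs

theorem noLoopRun_act {o : Act} : NoLoopRun ι (act o) := by
  intro R u h0 hu
  have h1 : Reach noComm emp (u 1) := h0.of_act_step (hu 0).1 ▸ .refl
  exact noLoopRun_of_inert (fun _ _ => not_step_emp) R _ h1 (hu.drop 1)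

theorem noLoopRun_alt (hp : NoLoopRun ι p) (hq : NoLoopRun ι q) : NoLoopRun ι (alt p q) := by
  intro R u h0 hu
  rcases h0.of_alt_step (hu 0).1 with h1 | h1
  exacts [hp R _ h1 (hu.drop 1), hq R _ h1 (hu.drop 1)]

theorem noLoopRun_seq (hp : NoLoopRun ι p) (hr : NoLoopRun ι r) : NoLoopRun ι (seq p r) := by
  intro R u h0 hu
  by_cases hj : ∃ j, Reach noComm r (u j)
  · obtain ⟨j, hj⟩ := hj
    exact hr R _ (by simpa only [zero_add] using hj) (hu.drop j)
  choose v hv hu_eq using fun i => ((hu.reach h0 i).of_seq).resolve_right fun h => hj ⟨i, h⟩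
  refine hp (seq r R) v (hv 0) fun i => ⟨?_, ?_⟩
  · obtain ⟨α, hs⟩ := (hu i).1
    rw [hu_eq i, hu_eq (i + 1)] at hs
    rcases step_seq_iff.1 hs with ⟨v', h, he⟩ | ⟨-, h⟩
    · exact ⟨α, (Expr.seq.inj he).1 ▸ h⟩
    · exact (hj ⟨i + 1, hu_eq (i + 1) ▸ .single ⟨α, h⟩⟩).elim
  · exact (hu_eq i ▸ (hu i).2).of_bisim (bisim_seq_assoc _ _ _).symm

/-- A state `z·s*·R` that can terminate in one step has `z` terminated (as `R` cannot terminate),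
so it can restart `s*` as well. Played against the exits `d` (from `x₀`) and `e` (from `x₁`), this
rules out a restart between two loop states. -/
theorem not_onLoop_restart (hι : Injective ι) (hx : Term x) {s' : Expr Act}
    (hs : Step noComm s α s') (h : OnLoop ι (seq (seq x (star s)) R))
    (h' : OnLoop ι (seq (seq s' (star s)) R)) : False := by
  have restart : ∀ {z}, Term z →
      Step noComm (seq (seq z (star s)) R) α (seq (seq s' (star s)) R) :=
    fun hz => .seql (.seqr hz (.star hs))
  have hR : ¬ Term R := fun hR => by
    have ht : Term (seq (seq x (star s)) R) := term_seq_iff.2 ⟨term_seq_iff.2 ⟨hx, .star⟩, hR⟩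
    rcases h with h | h <;> cases (Bisimilar.term_iff h).1 ht
  have term_of_final : ∀ {z m l}, Sim ι (seq (seq z (star s)) R) m →
      m.next l = some .t → Term z := by
    intro z m l hz hl
    obtain ⟨W, hW, hWt⟩ := hz.back hl
    exact (term_seq_iff.1 (hW.seqr_of_term ((Bisimilar.term_iff hWt).2 rfl) hR).1).1
  rcases h.step hι h' (restart hx) with ⟨hP, hP', rfl⟩ | ⟨hP, hP', rfl⟩
  · obtain ⟨D, hD, hDz⟩ := hP.back (l := .d) rfl
    rcases hD.of_seq_seq_star with ⟨z, rfl⟩ | ⟨-, hRd⟩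
    · exact hDz.not_step hι rfl (restart (term_of_final hDz (l := .c) rfl))
    by_cases hs' : Term s'
    · exact hP'.not_step hι rfl (.seqr (term_seq_iff.2 ⟨hs', .star⟩) hRd)
    obtain ⟨E, hE, hEy⟩ := hP'.back (l := .e) rfl
    rcases hE.of_seq_seq_star with ⟨z, rfl⟩ | ⟨hs'', -⟩
    · have hz := term_of_final hEy (l := .d) rfl
      obtain ⟨m, hm, hDm⟩ := hEy.forth_label hι (.seqr (term_seq_iff.2 ⟨hz, .star⟩) hRd)
      cases hm
      cases hDz.unique hι hDm
    · exact hs' hs''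
  · obtain ⟨E, hE, hEy⟩ := hP.back (l := .e) rfl
    rcases hE.of_seq_seq_star with ⟨z, rfl⟩ | ⟨-, hRe⟩
    · exact hEy.not_step hι rfl (restart (term_of_final hEy (l := .d) rfl))
    by_cases hs' : Term s'
    · exact hP'.not_step hι rfl (.seqr (term_seq_iff.2 ⟨hs', .star⟩) hRe)
    obtain ⟨D, hD, hDz⟩ := hP'.back (l := .d) rfl
    rcases hD.of_seq_seq_star with ⟨z, rfl⟩ | ⟨hs'', -⟩
    · exact hDz.not_step hι rfl (restart (term_of_final hDz (l := .c) rfl))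
    · exact hs' hs''

theorem noLoopRun_star (hι : Injective ι) (hs : NoLoopRun ι s) : NoLoopRun ι (star s) := by
  intro R u h0 hu
  choose v hv hu_eq using fun i => (hu.reach h0 i).of_star_step (hu i).1.choose_spec
  have hstep : ∀ i, StepAny noComm (v i) (v (i + 1)) ∨
      (Term (v i) ∧ StepAny noComm s (v (i + 1))) := by
    intro i
    obtain ⟨α, h⟩ := (hu (i + 1)).1
    rw [hu_eq i, hu_eq (i + 1)] at h
    rcases step_seq_iff.1 h with ⟨v', h, he⟩ | ⟨ht, h⟩
    · exact .inl ⟨α, (Expr.seq.inj he).1 ▸ h⟩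
    · obtain ⟨s', h, he⟩ := step_star_iff.1 h
      exact .inr ⟨ht, α, (Expr.seq.inj he).1 ▸ h⟩
  by_cases hrestart : ∃ i, Term (v i) ∧ StepAny noComm s (v (i + 1))
  · obtain ⟨i, ht, α, h⟩ := hrestart
    exact not_onLoop_restart hι ht h (hu_eq i ▸ (hu (i + 1)).2) (hu_eq (i + 1) ▸ (hu (i + 2)).2)
  refine hs (seq (star s) R) v (hv 0)
    fun i => ⟨(hstep i).resolve_right fun h => hrestart ⟨i, h⟩, ?_⟩
  exact (hu_eq i ▸ (hu (i + 1)).2).of_bisim (bisim_seq_assoc _ _ _).symm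

/-- Every step of `w` is enabled in both `x₀` and `x₁`, so it is a `c`-step. The `e`-step from
`x₁` must disable `c`, so it is a step of `R`; but then the `d`-exit from `x₀` leads, through `z`
and its final `c`-step, to a state that can still perform that `e`-step. -/
theorem not_onLoop_par_run_of_step (hι : Injective ι) {v : ℕ → Expr Act} {w : Expr Act}
    (hv : ∀ i, StepAny noComm (v i) (v (i + 1))) (hloop : ∀ i, OnLoop ι (seq (par (v i) w) R))
    {β : Act} {w' : Expr Act} (hw : Step noComm w β w') : False := by
  obtain ⟨i, hx₁, hx₀⟩ := exists_sim_x₁_x₀ hι (fun i => (hv i).imp fun _ h => .seql (.parl h)) hloop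
  have only_c : ∀ {β w'}, Step noComm w β w' → β = ι .c := by
    intro β w' hw
    obtain ⟨_, ⟨l, rfl, hl⟩, -⟩ := Bisimilar.forth hx₁ (.seql (.parr hw))
    obtain ⟨_, hl', -⟩ := hx₀.forth_label hι (.seql (.parr hw))
    have common : ∀ l (m m' : Spec), Spec.x₁.next l = some m → Spec.x₀.next l = some m' →
        l = .c := by
      decide
    rw [common l _ _ hl hl']
  obtain ⟨E, hE, hEy⟩ := hx₁.back (l := .e) rfl
  rcases step_seq_iff.1 hE with ⟨X, hX, rfl⟩ | ⟨hterm, hRe⟩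
  · rcases step_par_noComm_iff.1 hX with ⟨v', -, rfl⟩ | ⟨w'', hw'', -⟩
    · exact hEy.not_step hι rfl (.seql (.parr (only_c hw ▸ hw)))
    · exact absurd (hι (only_c hw'')) (by decide)
  have hR : ¬ Term R := fun hR => by cases (Bisimilar.term_iff hx₁).1 (.seq hterm hR)
  obtain ⟨D, hD, hDz⟩ := hx₀.back (l := .d) rfl
  rcases step_seq_iff.1 hD with ⟨X, -, rfl⟩ | ⟨hterm', -⟩
  · obtain ⟨W, hW, hWt⟩ := hDz.back (l := .c) rfl
    have hX := (hW.seqr_of_term ((Bisimilar.term_iff hWt).2 rfl) hR).1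
    exact hDz.not_step hι rfl (.seqr hX hRe)
  · exact hx₀.not_step hι rfl (.seqr hterm' hRe)

theorem not_onLoop_par_run (hι : Injective ι) {v : ℕ → Expr Act} {w : Expr Act}
    (hp : ∀ R', LoopRun ι R' v → False) (hv : ∀ i, StepAny noComm (v i) (v (i + 1)))
    (hloop : ∀ i, OnLoop ι (seq (par (v i) w) R)) : False := by
  by_cases hw : ∃ β w', Step noComm w β w'
  · obtain ⟨β, w', hw⟩ := hw
    exact not_onLoop_par_run_of_step hι hv hloop hw
  · obtain ⟨k, hk⟩ := exists_bisim_par_seq_of_inert fun β w' h => hw ⟨β, w', h⟩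
    exact hp (seq k R) fun i => ⟨hv i, (hloop i).of_bisim
      ((bisim_seq_assoc _ _ _).symm.trans ((hk (v i)).symm.seq_right R))⟩

/-- Adjacent steps of different components commute, but from `x₀` (resp. `x₁`) the loop cannot
take `b` (resp. `a`) first. -/
theorem one_sided_of_onLoop_par (hι : Injective ι) {v w : ℕ → Expr Act}
    (hloop : ∀ i, OnLoop ι (seq (par (v i) (w i)) R))
    (hside : ∀ i, (StepAny noComm (v i) (v (i + 1)) ∧ w (i + 1) = w i) ∨
      (StepAny noComm (w i) (w (i + 1)) ∧ v (i + 1) = v i)) :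
    (∀ i, StepAny noComm (v i) (v (i + 1)) ∧ w (i + 1) = w i) ∨
      (∀ i, StepAny noComm (w i) (w (i + 1)) ∧ v (i + 1) = v i) := by
  have left_right : ∀ i, StepAny noComm (v i) (v (i + 1)) → w (i + 1) = w i →
      StepAny noComm (w (i + 1)) (w (i + 2)) → v (i + 2) = v (i + 1) → False := by
    rintro i ⟨α, h⟩ hw ⟨β, h'⟩ hv
    refine (hloop i).not_swap hι (hloop (i + 1)) (hloop (i + 2)) (α := α) (β := β) ?_ ?_
      (P' := seq (par (v i) (w (i + 2))) R) ?_
    · rw [hw]; exact .seql (.parl h)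
    · rw [hv]; exact .seql (.parr h')
    · rw [← hw]; exact .seql (.parr h')
  have right_left : ∀ i, StepAny noComm (w i) (w (i + 1)) → v (i + 1) = v i →
      StepAny noComm (v (i + 1)) (v (i + 2)) → w (i + 2) = w (i + 1) → False := by
    rintro i ⟨α, h⟩ hv ⟨β, h'⟩ hw
    refine (hloop i).not_swap hι (hloop (i + 1)) (hloop (i + 2)) (α := α) (β := β) ?_ ?_
      (P' := seq (par (v (i + 2)) (w i)) R) ?_
    · rw [hv]; exact .seql (.parr h)
    · rw [hw]; exact .seql (.parl h')
    · rw [← hv]; exact .seql (.parl h')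
  rcases hside 0 with h0 | h0
  · exact .inl fun i => Nat.rec h0
      (fun i hi => (hside (i + 1)).resolve_right fun h => left_right i hi.1 hi.2 h.1 h.2) i
  · exact .inr fun i => Nat.rec h0
      (fun i hi => (hside (i + 1)).resolve_left fun h => right_left i hi.1 hi.2 h.1 h.2) i

theorem noLoopRun_par (hι : Injective ι) (hp : NoLoopRun ι p) (hq : NoLoopRun ι q) :
    NoLoopRun ι (par p q) := by
  intro R u h0 hu
  choose v w hv hw hu_eq using fun i => (hu.reach h0 i).of_par
  have hloop : ∀ i, OnLoop ι (seq (par (v i) (w i)) R) := fun i => hu_eq i ▸ (hu i).2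
  have hside : ∀ i, (StepAny noComm (v i) (v (i + 1)) ∧ w (i + 1) = w i) ∨
      (StepAny noComm (w i) (w (i + 1)) ∧ v (i + 1) = v i) := by
    intro i
    obtain ⟨α, h⟩ := (hu i).1
    rw [hu_eq i, hu_eq (i + 1)] at h
    rcases step_par_noComm_iff.1 h with ⟨v', h, he⟩ | ⟨w', h, he⟩
    · obtain ⟨rfl, hw⟩ := Expr.par.inj he
      exact .inl ⟨⟨α, h⟩, hw⟩
    · obtain ⟨hv, rfl⟩ := Expr.par.inj he
      exact .inr ⟨⟨α, h⟩, hv⟩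
  rcases one_sided_of_onLoop_par hι hloop hside with hleft | hright
  · have hw0 : ∀ i, w i = w 0 := fun i => Nat.rec rfl (fun i hi => (hleft i).2.trans hi) i
    exact not_onLoop_par_run hι (fun R' => hp R' v (hv 0)) (fun i => (hleft i).1)
      fun i => hw0 i ▸ hloop i
  · have hv0 : ∀ i, v i = v 0 := fun i => Nat.rec rfl (fun i hi => (hright i).2.trans hi) i
    exact not_onLoop_par_run hι (fun R' => hq R' w (hw 0)) (fun i => (hright i).1)
      fun i => (hv0 i ▸ hloop i).of_bisim ((bisim_par_comm (fun _ _ => rfl) _ _).seq_right R)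

theorem noLoopRun_of_noEncap (hι : Injective ι) (hg : NoEncap g) : NoLoopRun ι g := by
  induction g with
  | dl => exact noLoopRun_of_inert fun _ _ => not_step_dl
  | emp => exact noLoopRun_of_inert fun _ _ => not_step_emp
  | act => exact noLoopRun_act
  | seq p r ihp ihr => exact noLoopRun_seq (ihp hg.1) (ihr hg.2)
  | alt p q ihp ihq => exact noLoopRun_alt (ihp hg.1) (ihq hg.2)
  | star s ih => exact noLoopRun_star hι (ih hg)
  | par p q ihp ihq => exact noLoopRun_par hι (ihp hg.1) (ihq hg.2)
  | encap => exact hg.elim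

theorem not_sim_x₀ (hι : Injective ι) (hg : NoEncap g) : ¬ Sim ι g .x₀ := by
  intro h
  have succ : ∀ P : {P : Expr Act // OnLoop ι P}, ∃ Q : {Q // OnLoop ι Q}, StepAny noComm P.1 Q.1 :=
    fun P => let ⟨Q, hs, hQ⟩ := P.2.exists_step; ⟨⟨Q, hQ⟩, hs⟩
  choose f hf using succ
  refine noLoopRun_of_noEncap hι hg emp (fun n => (f^[n] ⟨g, .inl h⟩).1) .refl fun n => ⟨?_, ?_⟩
  · simp only [iterate_succ_apply']
    exact hf _
  · exact (f^[n] _).2.of_bisim (bisim_seq_emp _)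

end LoopRun

section SpecSim

variable {ι : Label → Act} {γ : Act → Act → Option Act} {α : Act} {x : Expr Act}

open Classical in
noncomputable def commOf (ι : Label → Act) (α β : Act) : Option Act :=
  if (α = ι .b ∧ β = ι .c) ∨ (α = ι .c ∧ β = ι .b) then some (ι .e) else none

theorem commOf_eq_some_iff {β δ : Act} :
    commOf ι α β = some δ ↔ ((α = ι .b ∧ β = ι .c) ∨ (α = ι .c ∧ β = ι .b)) ∧ ι .e = δ := by
  unfold commOf
  split_ifs with h
  · simp only [Option.some.injEq, h, true_and]
  · simp only [h, false_and]

theorem isCommFun_commOf (hι : Injective ι) : IsCommFun (commOf ι) := by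
  have e_inert : ∀ β, commOf ι (ι .e) β = none ∧ commOf ι β (ι .e) = none := fun β => by
    simp [commOf, hι.eq_iff]
  refine ⟨fun α β => Option.ext fun δ => by simp only [commOf_eq_some_iff]; tauto,
    fun α β δ => ?_⟩
  have lhs : (commOf ι α β).bind (commOf ι · δ) = none := by
    rcases h : commOf ι α β with _ | ε
    · rfl
    · exact (commOf_eq_some_iff.1 h).2 ▸ (e_inert δ).1
  have rhs : (commOf ι β δ).bind (commOf ι α) = none := by
    rcases h : commOf ι β δ with _ | ε
    · rfl
    · exact (commOf_eq_some_iff.1 h).2 ▸ (e_inert α).2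
  rw [lhs, rhs]

theorem Label.exists_iff {P : Label → Prop} : (∃ l, P l) ↔ P .a ∨ P .b ∨ P .c ∨ P .d ∨ P .e :=
  ⟨fun ⟨l, h⟩ => by cases l <;> simp [h], by rintro (h | h | h | h | h) <;> exact ⟨_, h⟩⟩

theorem step_specLeft₀_iff :
    Step γ (specLeft₀ ι) α x ↔ (α = ι .a ∧ x = specLeft₁ ι) ∨ (α = ι .d ∧ x = emp) := by
  simp [specLeft₀, specLeft₁, step_seq_iff, step_star_iff, step_act_iff, term_seq_iff,
    not_step_emp, Term.emp, Term.star, not_term_act]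

theorem step_specLeft₁_iff : Step γ (specLeft₁ ι) α x ↔ α = ι .b ∧ x = specLeft₀ ι := by
  simp [specLeft₀, specLeft₁, step_seq_iff, step_star_iff, step_act_iff, term_seq_iff,
    not_step_emp, Term.emp, Term.star, not_term_act]

theorem step_toExpr_iff (hι : Injective ι) {m : Spec} :
    Step (commOf ι) (m.toExpr ι) α x ↔ ∃ m', Spec.Step ι m α m' ∧ x = m'.toExpr ι := by
  cases m <;> simp only [Spec.toExpr, Spec.Step, Spec.next, Label.exists_iff, step_par_iff,
    step_specLeft₀_iff, step_specLeft₁_iff, step_act_iff, not_step_emp, commOf_eq_some_iff,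
    hι.eq_iff, @eq_comm _ (ι _) α, Option.some.injEq, or_and_right, exists_or, exists_and_left,
    exists_eq_left, existsAndEq, exists_false, reduceCtorEq, true_and, and_true, false_and,
    and_false, or_false, false_or, or_self, and_self]
  tauto

theorem sim_toExpr (hι : Injective ι) (m : Spec) :
    Bisimilar (Step (commOf ι)) Term (Spec.Step ι) (· = .t) (m.toExpr ι) m := by
  refine ⟨fun x m => x = m.toExpr ι, ?_, rfl⟩
  rintro _ m rfl
  refine ⟨fun α x hx => (step_toExpr_iff hι).1 hx,
    fun α m' hm => ⟨_, (step_toExpr_iff hι).2 ⟨m', hm, rfl⟩, rfl⟩, ?_⟩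
  cases m <;> simp [Spec.toExpr, specLeft₀, specLeft₁, term_par_iff, term_seq_iff, not_term_act,
    Term.emp]

end SpecSim

def Label.toAct (a b c d e : Act) : Label → Act
  | .a => a
  | .b => b
  | .c => c
  | .d => d
  | .e => e

theorem Label.toAct_injective {a b c d e : Act}
    (hab : a ≠ b) (hac : a ≠ c) (had : a ≠ d) (hae : a ≠ e)
    (hbc : b ≠ c) (hbd : b ≠ d) (hbe : b ≠ e)
    (hcd : c ≠ d) (hce : c ≠ e) (hde : d ≠ e) : Injective (Label.toAct a b c d e) := by
  rintro (_ | _ | _ | _ | _) (_ | _ | _ | _ | _) h <;> simp_all [Label.toAct, eq_comm]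

/-- PA*01 is less expressive than `⋃_γ ACP*01` modulo bisimilarity:
every PA*01 expression (ACP*01 expression without encapsulation, with the
everywhere-undefined communication function) is bisimilar to an ACP*01
expression for some communication function `γ`, and there are a communication
function `γ` with `γ b c = e` and an ACP*01 expression, namely
`ε·(a·b)*·d ‖ c` (with `a`, `b`, `c`, `d`, `e` distinct), that is not bisimilar
to any PA*01 expression. -/
theorem pa_less_expressive_than_acp {Act : Type} (a b c d e : Act)
    (hab : a ≠ b) (hac : a ≠ c) (had : a ≠ d) (hae : a ≠ e)
    (hbc : b ≠ c) (hbd : b ≠ d) (hbe : b ≠ e)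
    (hcd : c ≠ d) (hce : c ≠ e) (hde : d ≠ e) :
    (∀ p : Expr Act, NoEncap p →
      ∃ γ : Act → Act → Option Act, IsCommFun γ ∧
        ∃ q : Expr Act,
          Bisimilar (Step (fun _ _ => none)) Term (Step γ) Term p q) ∧
    (∃ γ : Act → Act → Option Act, IsCommFun γ ∧ γ b c = some e ∧
      ∀ q : Expr Act, NoEncap q →
        ¬ Bisimilar (Step (fun _ _ => none)) Term (Step γ) Term q
          (Expr.par
            (Expr.seq
              (Expr.seq Expr.emp (Expr.star (Expr.seq (Expr.act a) (Expr.act b))))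
              (Expr.act d))
            (Expr.act c))) := by
  refine ⟨fun p _ => ⟨noComm, ⟨fun _ _ => rfl, fun _ _ _ => rfl⟩, p, .refl _ _ p⟩, ?_⟩
  have hι := Label.toAct_injective hab hac had hae hbc hbd hbe hcd hce hde
  refine ⟨commOf (Label.toAct a b c d e), isCommFun_commOf hι,
    commOf_eq_some_iff.2 ⟨.inl ⟨rfl, rfl⟩, rfl⟩, fun q hq hbisim => ?_⟩
  exact not_sim_x₀ hι hq (hbisim.trans (sim_toExpr hι .x₀))
end
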